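/- arXiv:1701.00210 — 3 statements merged into one kernel-verified Lean document; each statement's English description precedes it below -/
import Mathlib

section
/- Let $H$ be a finite abelian group and $D \subseteq H$ an $S_2$-set such that additionally $2D \cap (D + D) = \varnothing$, where $2D = \{2d : d \in D\}$ and $D + D = \{d_1 + d_2 : d_1, d_2 \in D, d_1 \neq d_2\}$. Then for any $d_i, d_{i'}, d_j, d_{j'} \in D$ with $d_i \neq d_{i'}$ and $d_j \neq d_{j'}$, the equation $d_i - d_{i'} = d_{j'} - d_j$ implies $(d_i, d_{i'}) = (d_{j'}, d_j)$, provided every element of $H$ has odd order. -/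
lemma two_smul_inj {H : Type*} [AddCommGroup H] [Fintype H]
    (hodd : ∀ x : H, Odd (addOrderOf x)) {x y : H} (h : 2 • x = 2 • y) : x = y := by
  have h0 : 2 • (x - y) = 0 := by rw [smul_sub, h, sub_self]
  have hd : addOrderOf (x - y) ∣ 2 := addOrderOf_dvd_of_nsmul_eq_zero h0
  rcases (Nat.dvd_prime Nat.prime_two).mp hd with h' | h'
  · exact sub_eq_zero.mp (AddMonoid.addOrderOf_eq_one_iff.mp h')
  · have := hodd (x - y)
    rw [h'] at this
    simp [Nat.odd_iff] at this

theorem stmt_4 (H : Type*) [AddCommGroup H] [Fintype H]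
    (hodd : ∀ x : H, Odd (addOrderOf x))
    (D : Set H)
    (hS2 : ∀ d1 ∈ D, ∀ d2 ∈ D, ∀ d3 ∈ D, ∀ d4 ∈ D, d1 ≠ d2 → d3 ≠ d4 →
        d1 + d2 = d3 + d4 → (d1 = d3 ∧ d2 = d4) ∨ (d1 = d4 ∧ d2 = d3))
    (hmod : ∀ d ∈ D, ∀ d1 ∈ D, ∀ d2 ∈ D, d1 ≠ d2 → 2 • d ≠ d1 + d2)
    (di di' dj dj' : H) (hdi : di ∈ D) (hdi' : di' ∈ D) (hdj : dj ∈ D)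
    (hdj' : dj' ∈ D) (h1 : di ≠ di') (h2 : dj ≠ dj')
    (heq : di - di' = dj' - dj) : di = dj' ∧ di' = dj := by
  have hsum : di + dj = dj' + di' := sub_eq_sub_iff_add_eq_add.mp heq
  by_cases hij : di = dj
  · subst hij
    by_cases hji : dj' = di'
    · subst hji
      have : (2 : ℕ) • di = 2 • dj' := by rw [two_nsmul, two_nsmul]; exact hsum
      exact absurd (two_smul_inj hodd this) h2
    · exact absurd ((two_nsmul di).trans hsum) (hmod di hdi dj' hdj' di' hdi' hji)
  · by_cases hji : dj' = di'
    · subst hji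
      exact absurd ((two_nsmul dj').trans hsum.symm) (hmod dj' hdj' di hdi dj hdj hij)
    · rcases hS2 di hdi dj hdj dj' hdj' di' hdi' hij hji hsum with ⟨a, b⟩ | ⟨a, b⟩
      · exact ⟨a, b.symm⟩
      · exact absurd a h1
end

section
/- Let $R$ be a finite commutative local ring with identity, and $G$ a finite abelian group of order $n$ and exponent $m$. Then $R[G]$ is isomorphic as a ring to the product ring $R^n$ (with pointwise operations) if and only if $R$ contains a primitive $m$-th root of unity and $m$ is a unit in $R$. -/
/-!
If `ξ ∈ R` has order `m = exp G` and `m` is a unit, write `G ≅ ∏ ZMod nᵢ`; the roots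
`ζᵢ = ξ ^ (m / nᵢ)` give a pairing `⟨x, y⟩ = ∏ ζᵢ ^ (xᵢ yᵢ)` whose character sums vanish away from
the identity, because for an `n`-th root of unity `w ≠ 1` in a local ring with `n` invertible,
`w - 1` or `1 + w + ⋯ + w ^ (n - 1)` is a unit. As `|G|` is invertible, Fourier inversion makes
the transform `R[G] → R^G` injective, hence bijective since both sides have `|R| ^ |G|` elements.

Conversely, an isomorphism `R[G] ≃+* R^G` embeds `G` into `(Rˣ)^G`, so `m` divides the exponent
of the finite abelian group `Rˣ`, which then has an element of order `m`. If `m` were not a unit,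
the residue characteristic `p` would divide `m`; for `g ∈ G` of order `p`, `(g - 1) ^ p ∈ p R[G]`
makes `g - 1` nilpotent although its coefficient at `g` is `1`. But `R^G` has at most as many
nilpotents as there are coefficient vectors with nilpotent entries, so every nilpotent of `R[G]`
has nilpotent coefficients.
-/

open Finset Monoid

namespace IsLocalRing

variable {R : Type*} [CommRing R] [IsLocalRing R]

theorem geom_sum_eq_zero_of_pow_eq_one {w : R} {n : ℕ} (hw : w ^ n = 1) (hw1 : w ≠ 1)
    (hn : IsUnit (n : R)) : ∑ i ∈ range n, w ^ i = 0 := by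
  have hS : (∑ i ∈ range n, w ^ i) * (w - 1) = 0 := by rw [geom_sum_mul, hw, sub_self]
  by_cases hu : IsUnit (w - 1)
  · exact hu.mul_left_eq_zero.mp hS
  · have hres : residue R w = 1 := by
      rw [← sub_eq_zero, ← map_one (residue R), ← map_sub]
      exact not_not.mp (mt (residue_ne_zero_iff_isUnit _).mp hu)
    have hSu : IsUnit (∑ i ∈ range n, w ^ i) := by
      rw [← residue_ne_zero_iff_isUnit, map_sum]
      simpa [hres] using (residue_ne_zero_iff_isUnit _).mpr hn
    exact absurd (sub_eq_zero.mp (hSu.mul_right_eq_zero.mp hS)) hw1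

theorem sum_zmod_pow_val_eq_zero {n : ℕ} [NeZero n] {w : R} (hw : w ^ n = 1) (hw1 : w ≠ 1)
    (hn : IsUnit (n : R)) : ∑ b : ZMod n, w ^ b.val = 0 := by
  obtain ⟨k, rfl⟩ := Nat.exists_eq_succ_of_ne_zero (NeZero.ne n)
  exact (Fin.sum_univ_eq_sum_range (w ^ ·) _).trans (geom_sum_eq_zero_of_pow_eq_one hw hw1 hn)

theorem exists_prime_dvd_natCast_mem_maximalIdeal {n : ℕ} (hn : n ≠ 0) (h : ¬IsUnit (n : R)) :
    ∃ p, p.Prime ∧ p ∣ n ∧ (p : R) ∈ maximalIdeal R := by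
  set p := ringChar (ResidueField R)
  have hpn : p ∣ n := ringChar.dvd <| by
    rw [← map_natCast (residue R)]
    exact not_not.mp (mt (residue_ne_zero_iff_isUnit _).mp h)
  have hp : p.Prime := (CharP.char_is_prime_or_zero (ResidueField R) p).resolve_right
    fun hp0 => hn (Nat.eq_zero_of_zero_dvd (hp0 ▸ hpn))
  refine ⟨p, hp, hpn, ?_⟩
  rw [← ker_residue, RingHom.mem_ker, map_natCast]
  exact ringChar.Nat.cast_ringChar

end IsLocalRing

theorem isNilpotent_sub_one_of_pow_prime_eq_one {A : Type*} [CommRing A] {p : ℕ} (hp : p.Prime)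
    (hpA : IsNilpotent (p : A)) {y : A} (hy : y ^ p = 1) : IsNilpotent (y - 1) := by
  obtain ⟨r, hr⟩ := exists_add_pow_prime_eq hp (y - 1) 1
  have hdiv : (y - 1) ^ p = p * (-((y - 1) * r)) := by
    rw [sub_add_cancel, hy, one_pow] at hr
    linear_combination -hr
  obtain ⟨k, hk⟩ := hpA
  exact ⟨p * k, by rw [pow_mul, hdiv, mul_pow, hk, zero_mul]⟩

namespace Monoid

theorem exponent_dvd_exponent_units_of_injective {G ι M : Type*} [Group G] [Monoid M]
    (f : G →* (ι → M)) (hf : Function.Injective f) : exponent G ∣ exponent Mˣ :=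
  exponent_dvd_of_forall_pow_eq_one fun g => hf <| funext fun i => by
    let φ : G →* Mˣ :=
      (Units.map ((Pi.evalMonoidHom (fun _ => M) i).comp f)).comp toUnits.toMonoidHom
    simpa [φ] using congrArg Units.val (pow_exponent_eq_one (φ g))

theorem exists_orderOf_eq_of_dvd_exponent {M : Type*} [CommMonoid M] (hM : ExponentExists M)
    {d : ℕ} (hd : d ∣ exponent M) : ∃ x : M, orderOf x = d := by
  obtain ⟨w, hw⟩ := exists_orderOf_eq_exponent hM
  exact ⟨_, orderOf_pow_orderOf_div (hw ▸ hM.exponent_ne_zero) (hw ▸ hd)⟩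

end Monoid

namespace MonoidAlgebra

instance {R G : Type*} [Semiring R] [Finite R] [Finite G] : Finite (MonoidAlgebra R G) :=
  .of_equiv _ (coeffEquiv.trans Finsupp.equivFunOnFinite).symm

theorem nonempty_ringEquiv_pi_of_mulEquiv {A G H : Type*} [CommSemiring A] [Monoid G] [Monoid H]
    (e : G ≃* H) (h : Nonempty (MonoidAlgebra A H ≃+* (H → A))) :
    Nonempty (MonoidAlgebra A G ≃+* (G → A)) :=
  h.map fun Ψ => ((domCongr A A e).toRingEquiv.trans Ψ).trans
    (RingEquiv.piCongrLeft (fun _ => A) e.toEquiv).symm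

theorem sum_lift_mul_apply_inv {A G : Type*} [CommRing A] [Group G] [Fintype G]
    (ψ : G → G →* A) (hψ : ∀ x ≠ 1, ∑ y, ψ y x = 0) (f : MonoidAlgebra A G) (g : G) :
    ∑ y, lift A A G (ψ y) f * ψ y g⁻¹ = Fintype.card G * f.coeff g := by
  classical
  have hsum : ∀ x, ∑ y, ψ y (x * g⁻¹) = if x = g then (Fintype.card G : A) else 0 := by
    intro x
    split_ifs with hx
    · simp [hx]
    · exact hψ _ (mul_inv_eq_one.not.mpr hx)
  calc ∑ y, lift A A G (ψ y) f * ψ y g⁻¹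
      = ∑ y, ∑ x, f.coeff x * ψ y (x * g⁻¹) := by
        refine sum_congr rfl fun y _ => ?_
        rw [lift_apply, Finsupp.sum_fintype _ _ (by simp), sum_mul]
        exact sum_congr rfl fun x _ => by rw [smul_eq_mul, map_mul, mul_assoc]
    _ = ∑ x, f.coeff x * ∑ y, ψ y (x * g⁻¹) := by
        rw [sum_comm]; simp_rw [mul_sum]
    _ = Fintype.card G * f.coeff g := by
        simp only [hsum, mul_ite, mul_zero, sum_ite_eq', mem_univ, if_true]
        exact mul_comm _ _

theorem nonempty_ringEquiv_pi_of_sum_eq_zero {A G : Type*} [CommRing A] [Finite A] [Group G]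
    [Fintype G] (ψ : G → G →* A) (hψ : ∀ x ≠ 1, ∑ y, ψ y x = 0)
    (hG : IsUnit (Fintype.card G : A)) : Nonempty (MonoidAlgebra A G ≃+* (G → A)) := by
  let Φ : MonoidAlgebra A G →+* (G → A) := RingHom.pi fun y => (lift A A G (ψ y)).toRingHom
  have hinj : Function.Injective Φ := (injective_iff_map_eq_zero Φ).mpr fun f hf => by
    ext g
    have := sum_lift_mul_apply_inv ψ hψ f g
    simp only [show ∀ y, lift A A G (ψ y) f = 0 from congrFun hf, zero_mul, sum_const_zero] at this
    simpa using hG.mul_right_eq_zero.mp this.symm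
  exact ⟨.ofBijective Φ <| hinj.bijective_of_nat_card_le
    (Nat.card_congr (coeffEquiv.trans Finsupp.equivFunOnFinite)).ge⟩

theorem isNilpotent_of_forall_isNilpotent_coeff {R G : Type*} [CommSemiring R] [CommMonoid G]
    {a : MonoidAlgebra R G} (h : ∀ g, IsNilpotent (a.coeff g)) : IsNilpotent a := by
  rw [← a.sum_coeff_single]
  refine isNilpotent_sum fun g _ => ?_
  obtain ⟨k, hk⟩ := h g
  exact ⟨k, by rw [single_pow, hk, single_zero]⟩

theorem isNilpotent_coeff_of_ringEquiv {R G : Type*} [CommRing R] [Finite R] [CommMonoid G]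
    [Finite G] (Ψ : MonoidAlgebra R G ≃+* (G → R)) {a : MonoidAlgebra R G} (ha : IsNilpotent a)
    (g : G) : IsNilpotent (a.coeff g) := by
  let ofNilCoeff (c : G → {r : R // IsNilpotent r}) : {a : MonoidAlgebra R G // IsNilpotent a} :=
    ⟨ofCoeff (Finsupp.equivFunOnFinite.symm fun g => c g),
      isNilpotent_of_forall_isNilpotent_coeff fun g => (c g).2⟩
  have hinj : Function.Injective ofNilCoeff := fun c c' h => funext fun g =>
    Subtype.ext (congrArg (fun a : {a : MonoidAlgebra R G // IsNilpotent a} => a.1.coeff g) h)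
  have hcard : Nat.card {a : MonoidAlgebra R G // IsNilpotent a} ≤
      Nat.card (G → {r : R // IsNilpotent r}) := calc
    _ = Nat.card {f : G → R // IsNilpotent f} :=
      Nat.card_congr (Ψ.toEquiv.subtypeEquiv fun a => (IsNilpotent.map_iff Ψ.injective).symm)
    _ ≤ _ := Nat.card_le_card_of_injective (fun f g => ⟨f.1 g, f.2.map (Pi.evalRingHom _ g)⟩)
      fun f f' h => Subtype.ext (funext fun g => congrArg Subtype.val (congrFun h g))
  obtain ⟨c, hc⟩ := (hinj.bijective_of_nat_card_le hcard).surjective ⟨a, ha⟩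
  rw [← show (ofNilCoeff c).1 = a from congrArg Subtype.val hc]
  exact (c g).2

end MonoidAlgebra

section ZModCharacters

variable {M : Type*} [CommMonoid M] {n : ℕ} [NeZero n]

def zmodPowHom (w : M) (hw : w ^ n = 1) : Multiplicative (ZMod n) →* M where
  toFun a := w ^ a.toAdd.val
  map_one' := by simp
  map_mul' a b := by rw [toAdd_mul, ZMod.val_add, ← pow_eq_pow_mod _ hw, pow_add]

@[simp]
theorem zmodPowHom_apply (w : M) (hw : w ^ n = 1) (a : Multiplicative (ZMod n)) :
    zmodPowHom w hw a = w ^ a.toAdd.val := rfl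

theorem zmodPowHom_injective {ζ : M} (hζ : orderOf ζ = n) :
    Function.Injective (zmodPowHom ζ (orderOf_dvd_iff_pow_eq_one.mp hζ.dvd)) := by
  refine (injective_iff_map_eq_one _).mpr fun a ha => ?_
  have hdvd := orderOf_dvd_of_pow_eq_one (show ζ ^ a.toAdd.val = 1 from ha)
  rw [hζ] at hdvd
  exact toAdd_eq_zero.mp ((ZMod.val_eq_zero _).mp (Nat.eq_zero_of_dvd_of_lt hdvd (ZMod.val_lt _)))

end ZModCharacters

section PiZMod

variable {ι : Type*} [Fintype ι] {n : ι → ℕ} [∀ i, NeZero (n i)]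

def piZModPairing {M : Type*} [CommMonoid M] (ζ : ι → M) (hζ : ∀ i, ζ i ^ n i = 1)
    (y : ∀ i, Multiplicative (ZMod (n i))) : (∀ i, Multiplicative (ZMod (n i))) →* M :=
  ∏ i, ((zmodPowHom (ζ i) (hζ i)).comp (Pi.evalMonoidHom _ i)) ^ (y i).toAdd.val

theorem piZModPairing_apply {M : Type*} [CommMonoid M] (ζ : ι → M) (hζ : ∀ i, ζ i ^ n i = 1)
    (y x : ∀ i, Multiplicative (ZMod (n i))) :
    piZModPairing ζ hζ y x = ∏ i, (ζ i ^ (x i).toAdd.val) ^ (y i).toAdd.val := by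
  simp [piZModPairing, MonoidHom.finsetProd_apply, MonoidHom.pow_apply]

variable [DecidableEq ι] {R : Type*} [CommRing R] [IsLocalRing R]

theorem sum_piZModPairing_eq_zero (ζ : ι → R) (hζ : ∀ i, orderOf (ζ i) = n i)
    (hn : ∀ i, IsUnit (n i : R)) {x : ∀ i, Multiplicative (ZMod (n i))} (hx : x ≠ 1) :
    ∑ y, piZModPairing ζ (fun i => orderOf_dvd_iff_pow_eq_one.mp (hζ i).dvd) y x = 0 := by
  obtain ⟨i, hi⟩ := Function.ne_iff.mp hx
  simp_rw [piZModPairing_apply]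
  rw [← Fintype.prod_sum fun i (b : Multiplicative (ZMod (n i))) =>
    (ζ i ^ (x i).toAdd.val) ^ b.toAdd.val]
  refine prod_eq_zero (mem_univ i) <|
    (Fintype.sum_equiv Multiplicative.toAdd _ _ fun _ => rfl).trans
      (IsLocalRing.sum_zmod_pow_val_eq_zero ?_ ?_ (hn i))
  · rw [← pow_mul, mul_comm, pow_mul, orderOf_dvd_iff_pow_eq_one.mp (hζ i).dvd, one_pow]
  · simpa using (zmodPowHom_injective (hζ i)).ne hi

theorem nonempty_ringEquiv_pi_zmod [Finite R] (ζ : ι → R) (hζ : ∀ i, orderOf (ζ i) = n i)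
    (hn : ∀ i, IsUnit (n i : R)) :
    Nonempty (MonoidAlgebra R (∀ i, Multiplicative (ZMod (n i))) ≃+*
      ((∀ i, Multiplicative (ZMod (n i))) → R)) := by
  refine MonoidAlgebra.nonempty_ringEquiv_pi_of_sum_eq_zero _
    (fun x hx => sum_piZModPairing_eq_zero ζ hζ hn hx) ?_
  simpa [Fintype.card_pi] using IsUnit.prod_univ_iff.mpr hn

end PiZMod

theorem nonempty_ringEquiv_pi_of_orderOf_eq_exponent {R : Type*} [CommRing R] [IsLocalRing R]
    [Finite R] (G : Type*) [CommGroup G] [Finite G] {ξ : R} (hξ : orderOf ξ = exponent G)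
    (hm : IsUnit (exponent G : R)) : Nonempty (MonoidAlgebra R G ≃+* (G → R)) := by
  classical
  obtain ⟨ι, _, n, hn, ⟨e⟩⟩ := CommGroup.equiv_prod_multiplicative_zmod_of_finite G
  have : ∀ i, NeZero (n i) := fun i => ⟨(zero_lt_one.trans (hn i)).ne'⟩
  have hdvd : ∀ i, n i ∣ orderOf ξ := fun i => by
    rw [hξ, exponent_eq_of_mulEquiv e]
    simpa [orderOf_piMulSingle, ZMod.addOrderOf_one] using
      order_dvd_exponent (Pi.mulSingle i (.ofAdd 1) : ∀ j, Multiplicative (ZMod (n j)))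
  refine MonoidAlgebra.nonempty_ringEquiv_pi_of_mulEquiv e <| nonempty_ringEquiv_pi_zmod
    (fun i => ξ ^ (orderOf ξ / n i)) (fun i => orderOf_pow_orderOf_div ?_ (hdvd i)) fun i => ?_
  · exact hξ ▸ exponent_ne_zero_of_finite
  · obtain ⟨c, hc⟩ := hdvd i
    rw [← hξ, hc, Nat.cast_mul] at hm
    exact isUnit_of_mul_isUnit_left hm

theorem exists_orderOf_eq_exponent_of_ringEquiv {R G : Type*} [CommRing R] [Nontrivial R]
    [Finite R] [Group G] (Ψ : MonoidAlgebra R G ≃+* (G → R)) :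
    ∃ ξ : R, orderOf ξ = exponent G := by
  have hdvd : exponent G ∣ exponent Rˣ := exponent_dvd_exponent_units_of_injective
    ((Ψ : MonoidAlgebra R G →* (G → R)).comp (MonoidAlgebra.of R G))
    (Ψ.injective.comp MonoidAlgebra.of_injective)
  obtain ⟨ξ, hξ⟩ := exists_orderOf_eq_of_dvd_exponent ExponentExists.of_finite hdvd
  exact ⟨ξ, orderOf_units.trans hξ⟩

theorem isUnit_exponent_of_ringEquiv {R G : Type*} [CommRing R] [IsLocalRing R] [Finite R]
    [CommGroup G] [Finite G] (Ψ : MonoidAlgebra R G ≃+* (G → R)) : IsUnit (exponent G : R) := by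
  by_contra hm
  obtain ⟨p, hp, hpm, hpR⟩ :=
    IsLocalRing.exists_prime_dvd_natCast_mem_maximalIdeal exponent_ne_zero_of_finite hm
  obtain ⟨g, hg⟩ := exists_orderOf_eq_of_dvd_exponent ExponentExists.of_finite hpm
  have hpA : IsNilpotent (p : MonoidAlgebra R G) := by
    simpa using (Ring.KrullDimLE.isNilpotent_iff_mem_maximalIdeal.mpr hpR).map
      (algebraMap R (MonoidAlgebra R G))
  have hnil : IsNilpotent (MonoidAlgebra.of R G g - 1) :=
    isNilpotent_sub_one_of_pow_prime_eq_one hp hpA <| by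
      rw [← map_pow, ← hg, pow_orderOf_eq_one, map_one]
  have hg1 : g ≠ 1 := by rintro rfl; exact hp.one_lt.ne' (hg ▸ orderOf_one)
  exact not_isNilpotent_one <| by
    simpa [MonoidAlgebra.one_def, hg1] using MonoidAlgebra.isNilpotent_coeff_of_ringEquiv Ψ hnil g

theorem stmt_16 (R : Type*) [CommRing R] [IsLocalRing R] [Fintype R]
    (G : Type*) [CommGroup G] [Fintype G] :
    Nonempty (MonoidAlgebra R G ≃+* (G → R)) ↔
      ((∃ ξ : R, ξ ^ Monoid.exponent G = 1 ∧
          ∀ k : ℕ, 0 < k → k < Monoid.exponent G → ξ ^ k ≠ 1) ∧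
        IsUnit (Monoid.exponent G : R)) := by
  have primitive_iff : ∀ ξ : R,
      (ξ ^ exponent G = 1 ∧ ∀ k : ℕ, 0 < k → k < exponent G → ξ ^ k ≠ 1) ↔
        orderOf ξ = exponent G := fun ξ => by
    rw [orderOf_eq_iff (Nat.pos_of_ne_zero exponent_ne_zero_of_finite)]
    exact and_congr_right' (forall_congr' fun _ => Imp.swap)
  simp only [primitive_iff]
  constructor
  · rintro ⟨Ψ⟩
    exact ⟨exists_orderOf_eq_exponent_of_ringEquiv Ψ, isUnit_exponent_of_ringEquiv Ψ⟩
  · rintro ⟨⟨ξ, hξ⟩, hm⟩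
    exact nonempty_ringEquiv_pi_of_orderOf_eq_exponent G hξ hm
end

section
/- Let $H$ be a finite abelian group, $I(H)$ its subgroup of elements of order dividing $2$, and $n_2(H) = [H : I(H)]$. If $S \subseteq H$ is an $S_2$-set with $|S| = k'$, then $|H| \geq \left(1 - \frac{1}{n_2(H)+1}\right)(k'^2 - 3k' + 2)$. -/
/-!
Let `k = #S` and let `r(x)` be the number of representations `x = u - (u - x)` with `u, u - x ∈ S`,
so that `∑ₓ r(x) = k²` and `r(0) = k`. For `x ≠ 0`, the Sidon property forces any two
representations of `x` to be shifts of each other by `±x`. Hence `r(x) ≤ 2` when `2x = 0`, while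
for `2x ≠ 0` we get `r(x) ≤ 1 + c(x)`, where `c(x)` counts the centres `v ∈ S` of progressions
`v - x, v, v + x` in `S`. Each `v ∈ S` is such a centre for at most the two differences `±x`
(as `{v - x, v + x}` is determined by its sum `2v`), so `∑ c(x) ≤ 2k`. Altogether
`k² ≤ k + 2(|I| - 1) + (|H| - |I|) + 2k`, i.e. `k² - 3k + 2 ≤ |H| + |I| = |H| (1 + 1/n₂)`.
-/

section

open Finset

variable {H : Type*} [AddCommGroup H]

def IsSidon (S : Finset H) : Prop :=
  ∀ d1 ∈ S, ∀ d2 ∈ S, ∀ d3 ∈ S, ∀ d4 ∈ S, d1 ≠ d2 → d3 ≠ d4 →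
    d1 + d2 = d3 + d4 → (d1 = d3 ∧ d2 = d4) ∨ (d1 = d4 ∧ d2 = d3)

namespace IsSidon

variable {S : Finset H}

theorem eq_add_or_eq_sub_of_sub_mem (hS : IsSidon S) {x u w : H} (hx : x ≠ 0)
    (hu : u ∈ S) (hu' : u - x ∈ S) (hw : w ∈ S) (hw' : w - x ∈ S) (hne : u ≠ w) :
    w = u + x ∨ w = u - x := by
  by_contra! hc
  have hne' : u ≠ w - x := fun h => hc.1 (by rw [h]; abel)
  rcases hS u hu (w - x) hw' w hw (u - x) hu' hne' hc.2 (by abel) with ⟨h, -⟩ | ⟨h, -⟩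
  · exact hne h
  · exact hx (sub_eq_self.mp h.symm)

variable [DecidableEq H]

def diffReps (S : Finset H) (x : H) : Finset H := {u ∈ S | u - x ∈ S}

def apCentres (S : Finset H) (x : H) : Finset H := {v ∈ S | v - x ∈ S ∧ v + x ∈ S}

theorem card_diffReps_le_two (hS : IsSidon S) {x : H} (hx2 : 2 • x = 0) (hx : x ≠ 0) :
    #(diffReps S x) ≤ 2 := by
  have hneg : -x = x := neg_eq_of_add_eq_zero_left (by rwa [← two_nsmul])
  have hshift : ∀ u ∈ diffReps S x, ∀ w ∈ diffReps S x, u ≠ w → w = u + x := by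
    intro u hu w hw hne
    simp only [diffReps, mem_filter] at hu hw
    rcases hS.eq_add_or_eq_sub_of_sub_mem hx hu.1 hu.2 hw.1 hw.2 hne with h | h
    · exact h
    · rwa [sub_eq_add_neg, hneg] at h
  by_contra! h3
  obtain ⟨a, ha, b, hb, c, hc, hab, hac, hbc⟩ := two_lt_card.mp h3
  exact hbc ((hshift a ha b hb hab).trans (hshift a ha c hc hac).symm)

theorem card_diffReps_le_one_add (hS : IsSidon S) {x : H} (hx : x ≠ 0) :
    #(diffReps S x) ≤ 1 + #(apCentres S x) := by
  have hsub : apCentres S x ⊆ diffReps S x := fun v hv => by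
    simp only [apCentres, diffReps, mem_filter] at hv ⊢
    exact ⟨hv.1, hv.2.1⟩
  -- a representation `u` that is not a centre has `u + x ∉ S`; two of them would be `x` apart
  have hends : #(diffReps S x \ apCentres S x) ≤ 1 := by
    refine card_le_one.mpr fun u hu w hw => by_contra fun hne => ?_
    simp only [apCentres, diffReps, mem_sdiff, mem_filter, not_and] at hu hw
    rcases hS.eq_add_or_eq_sub_of_sub_mem hx hu.1.1 hu.1.2 hw.1.1 hw.1.2 hne with h | h
    · exact hu.2 hu.1.1 hu.1.2 (h ▸ hw.1.1)
    · exact hw.2 hw.1.1 hw.1.2 (by rw [h, sub_add_cancel]; exact hu.1.1)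
  have := card_sdiff_add_card_eq_card hsub
  omega

variable [Fintype H]

theorem sum_card_diffReps (S : Finset H) : ∑ x, #(diffReps S x) = #S * #S := by
  have hfib : ∀ u ∈ S, #{x | u - x ∈ S} = #S := fun u _ =>
    card_nbij' (u - ·) (u - ·) (fun x hx => by simpa using hx) (fun s hs => by simpa using hs)
      (fun x _ => sub_sub_cancel u x) (fun s _ => sub_sub_cancel u s)
  calc ∑ x, #(diffReps S x) = ∑ u ∈ S, #{x | u - x ∈ S} :=
        sum_card_bipartiteAbove_eq_sum_card_bipartiteBelow _
    _ = #S * #S := by rw [sum_congr rfl hfib, sum_const, smul_eq_mul]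

theorem card_filter_apCentre_le_two (hS : IsSidon S) (v : H) :
    #{x | 2 • x ≠ 0 ∧ v - x ∈ S ∧ v + x ∈ S} ≤ 2 := by
  have hpm : ∀ x y : H, 2 • x ≠ 0 → v - x ∈ S → v + x ∈ S → 2 • y ≠ 0 → v - y ∈ S →
      v + y ∈ S → x ≠ y → y = -x := by
    intro x y hx hxm hxp hy hym hyp hxy
    have hne : ∀ z : H, 2 • z ≠ 0 → v + z ≠ v - z := fun z hz h =>
      hz (by rw [two_nsmul]; simpa [sub_eq_add_neg, add_eq_zero_iff_eq_neg] using h)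
    rcases hS (v + x) hxp (v - x) hxm (v + y) hyp (v - y) hym (hne x hx) (hne y hy) (by abel)
      with ⟨h, -⟩ | ⟨h, -⟩
    · exact absurd (add_left_cancel h) hxy
    · rw [sub_eq_add_neg] at h
      rw [add_left_cancel h, neg_neg]
  by_contra! h3
  obtain ⟨a, ha, b, hb, c, hc, hab, hac, hbc⟩ := two_lt_card.mp h3
  simp only [mem_filter, mem_univ, true_and] at ha hb hc
  exact hbc ((hpm a b ha.1 ha.2.1 ha.2.2 hb.1 hb.2.1 hb.2.2 hab).trans
    (hpm a c ha.1 ha.2.1 ha.2.2 hc.1 hc.2.1 hc.2.2 hac).symm)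

theorem sum_card_apCentres_le (hS : IsSidon S) :
    ∑ x with 2 • x ≠ 0, #(apCentres S x) ≤ 2 * #S := by
  calc ∑ x with 2 • x ≠ 0, #(apCentres S x)
      = ∑ v ∈ S, #{x | 2 • x ≠ 0 ∧ v - x ∈ S ∧ v + x ∈ S} := by
        refine (sum_card_bipartiteAbove_eq_sum_card_bipartiteBelow
          (r := fun x v => v - x ∈ S ∧ v + x ∈ S)).trans ?_
        simp only [bipartiteBelow, filter_filter]
    _ ≤ ∑ _v ∈ S, 2 := sum_le_sum fun v _ => hS.card_filter_apCentre_le_two v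
    _ = 2 * #S := by rw [sum_const, smul_eq_mul, mul_comm]

theorem sum_card_diffReps_involutions_le (hS : IsSidon S) :
    ∑ x with 2 • x = 0, #(diffReps S x) + 2 ≤ #S + 2 * #{x : H | 2 • x = 0} := by
  have h0 : (0 : H) ∈ ({x | 2 • x = 0} : Finset H) := by simp
  have hr0 : diffReps S 0 = S := filter_true_of_mem fun u hu => by simpa using hu
  have hrest : ∑ x ∈ ({x | 2 • x = 0} : Finset H).erase 0, #(diffReps S x)
      ≤ 2 * (#{x : H | 2 • x = 0} - 1) := by
    rw [← card_erase_of_mem h0, mul_comm, ← smul_eq_mul]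
    refine sum_le_card_nsmul _ _ _ fun x hx => ?_
    simp only [mem_erase, mem_filter, mem_univ, true_and] at hx
    exact hS.card_diffReps_le_two hx.2 hx.1
  have hpos := card_pos.mpr ⟨0, h0⟩
  rw [← add_sum_erase _ _ h0, hr0]
  omega

theorem sum_card_diffReps_nonInvolutions_le (hS : IsSidon S) :
    ∑ x with 2 • x ≠ 0, #(diffReps S x) ≤ #{x : H | 2 • x ≠ 0} + 2 * #S :=
  calc ∑ x with 2 • x ≠ 0, #(diffReps S x)
      ≤ ∑ x with 2 • x ≠ 0, (1 + #(apCentres S x)) := sum_le_sum fun x hx =>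
        hS.card_diffReps_le_one_add fun h => (mem_filter.mp hx).2 (by rw [h, smul_zero])
    _ ≤ #{x : H | 2 • x ≠ 0} + 2 * #S := by
        rw [sum_add_distrib, sum_const, smul_eq_mul, mul_one]
        exact Nat.add_le_add_left hS.sum_card_apCentres_le _

theorem card_mul_card_add_two_le (hS : IsSidon S) :
    #S * #S + 2 ≤ 3 * #S + Fintype.card H + #{x : H | 2 • x = 0} := by
  have hcard : #{x : H | 2 • x = 0} + #{x : H | 2 • x ≠ 0} = Fintype.card H :=
    card_filter_add_card_filter_not _
  have hsplit :=
    sum_filter_add_sum_filter_not univ (fun x : H => 2 • x = 0) fun x => #(diffReps S x)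
  simp only [← ne_eq, sum_card_diffReps] at hsplit
  have := hS.sum_card_diffReps_involutions_le
  have := hS.sum_card_diffReps_nonInvolutions_le
  omega

end IsSidon

end

theorem stmt_18 (H : Type*) [AddCommGroup H] [Fintype H]
    (S : Finset H) (k' : ℕ) (hk : S.card = k')
    (hS2 : ∀ d1 ∈ S, ∀ d2 ∈ S, ∀ d3 ∈ S, ∀ d4 ∈ S, d1 ≠ d2 → d3 ≠ d4 →
        d1 + d2 = d3 + d4 → (d1 = d3 ∧ d2 = d4) ∨ (d1 = d4 ∧ d2 = d3)) :
    let I : AddSubgroup H :=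
      AddMonoidHom.ker (AddMonoidHom.mk' (fun x : H => 2 • x) (by intro a b; simp [smul_add]))
    let n2 : ℕ := I.index
    (Fintype.card H : ℚ) ≥
      (1 - 1 / ((n2 : ℚ) + 1)) * ((k' : ℚ) ^ 2 - 3 * (k' : ℚ) + 2) := by
  classical
  intro I n2
  subst hk
  have hcount := IsSidon.card_mul_card_add_two_le hS2
  have hI : Nat.card I = (Finset.univ.filter fun x : H => 2 • x = 0).card := by
    rw [← Fintype.card_subtype, ← Nat.card_eq_fintype_card]
    rfl
  have hindex : n2 * (Finset.univ.filter fun x : H => 2 • x = 0).card = Fintype.card H := by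
    rw [← hI, ← Nat.card_eq_fintype_card]
    exact I.index_mul_card
  have hn2 : 1 ≤ n2 := Nat.one_le_iff_ne_zero.mpr AddSubgroup.index_ne_zero_of_finite
  rw [ge_iff_le, one_sub_div (by positivity), add_sub_cancel_right, div_mul_eq_mul_div,
    div_le_iff₀ (by positivity)]
  qify at hcount hindex hn2
  nlinarith
end
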